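/- Let H = Σ_{γ∈Γ} h_γ P_γ and H' = Σ_{γ∈Γ} h'_γ P_γ be n-qubit Hamiltonians with real coefficients and distinct non-identity Pauli strings P_γ. Fix a qubit i and suppose ‖[A, H−H']‖_τ ≤ ε for every A ∈ {X_i, Y_i, Z_i}, where ‖B‖_τ² = 2^{-n} Tr(B B†). Then |h_γ − h'_γ| ≤ ε for every γ such that P_γ acts nontrivially on qubit i. -/

import Mathlib

/-!
Write `D = H - H' = ∑ c_γ P_γ`. If `P_γ` acts on qubit `i`, pick a single-qubit Pauli `A` on
qubit `i` anticommuting with `P_γ`. Pairing `[A, D]` with the unitary `A P_γ` in the trace inner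
product gives `Tr([A, D] P_γ A) = 2 Tr(D P_γ) = 2^(n+1) c_γ` by orthogonality of Pauli strings,
while Cauchy–Schwarz bounds it by `2^n ‖[A, D]‖_τ ≤ 2^n ε`. Hence `2 |c_γ| ≤ ε`.
-/

open Matrix

/-- The single-qubit Pauli matrices `I, X, Y, Z`. -/
noncomputable def pauli : Fin 4 → Matrix (Fin 2) (Fin 2) ℂ
  | 0 => 1
  | 1 => !![0, 1; 1, 0]
  | 2 => !![0, -Complex.I; Complex.I, 0]
  | 3 => !![1, 0; 0, -1]

/-- The Pauli string `⊗_v σ_{s(v)}` on the qubits indexed by `V`. -/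
noncomputable def pauliString {V : Type*} [Fintype V] (s : V → Fin 4) :
    Matrix (V → Fin 2) (V → Fin 2) ℂ :=
  Matrix.of fun x y => ∏ v, pauli (s v) (x v) (y v)

/-- The normalized trace norm `‖B‖_τ = √(2^{-n} Tr(B Bᴴ))` w.r.t. the maximally mixed state. -/
noncomputable def tauNorm {V : Type*} [Fintype V] [DecidableEq V]
    (B : Matrix (V → Fin 2) (V → Fin 2) ℂ) : ℝ :=
  Real.sqrt (((B * Bᴴ).trace.re) / 2 ^ Fintype.card V)

open scoped ComplexOrder in
lemma Matrix.norm_trace_mul_conjTranspose_le {n 𝕜 : Type*} [Fintype n] [RCLike 𝕜]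
    (A B : Matrix n n 𝕜) :
    ‖(A * Bᴴ).trace‖ ≤
      √(RCLike.re (A * Aᴴ).trace) * √(RCLike.re (B * Bᴴ).trace) := by
  classical
  let := toMatrixSeminormedAddCommGroup (1 : Matrix n n 𝕜) PosSemidef.one
  let := toMatrixInnerProductSpace (1 : Matrix n n 𝕜) PosSemidef.one
  have hinner (X Y : Matrix n n 𝕜) : inner 𝕜 X Y = (Y * Xᴴ).trace := by
    show (Y * 1 * Xᴴ).trace = _
    rw [mul_one]
  simpa only [hinner, norm_eq_sqrt_re_inner (𝕜 := 𝕜), mul_comm] using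
    norm_inner_le_norm (𝕜 := 𝕜) B A

lemma Matrix.trace_commutator_mul_of_anticomm {n R : Type*} [Fintype n] [DecidableEq n]
    [CommRing R] {A D P : Matrix n n R} (hA : A * A = 1) (hAP : A * P = -(P * A)) :
    ((A * D - D * A) * (P * A)).trace = 2 * (D * P).trace := by
  have hcycle : (A * D * (P * A)).trace = (D * P).trace := by
    rw [show A * D * (P * A) = A * (D * P * A) by simp only [mul_assoc], trace_mul_comm,
      mul_assoc, hA, mul_one]
  have hconj : D * A * (P * A) = -(D * P) := calc
    D * A * (P * A) = D * (A * P) * A := by simp only [mul_assoc]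
    _ = -(D * P * (A * A)) := by rw [hAP]; noncomm_ring
    _ = -(D * P) := by rw [hA, mul_one]
  rw [sub_mul, hconj, sub_neg_eq_add, trace_add, hcycle, two_mul]

section kronPi

variable {V ι R : Type*} [Fintype V] [CommSemiring R]

def kronPi (M : V → Matrix ι ι R) : Matrix (V → ι) (V → ι) R :=
  of fun x y => ∏ v, M v (x v) (y v)

lemma kronPi_mul [Fintype ι] [DecidableEq V] (M N : V → Matrix ι ι R) :
    kronPi M * kronPi N = kronPi (fun v => M v * N v) := by
  ext x y
  simp only [kronPi, mul_apply, of_apply, Finset.prod_univ_sum, Fintype.piFinset_univ,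
    Finset.prod_mul_distrib]

lemma trace_kronPi [Fintype ι] [DecidableEq V] (M : V → Matrix ι ι R) :
    (kronPi M).trace = ∏ v, (M v).trace := by
  simp only [trace, diag, kronPi, of_apply, Finset.prod_univ_sum, Fintype.piFinset_univ]

lemma kronPi_one [DecidableEq V] [DecidableEq ι] :
    kronPi (fun _ : V => (1 : Matrix ι ι R)) = 1 := by
  ext x y
  simp only [kronPi, of_apply, one_apply, Fintype.prod_boole, funext_iff]

lemma conjTranspose_kronPi [StarRing R] (M : V → Matrix ι ι R) :
    (kronPi M)ᴴ = kronPi (fun v => (M v)ᴴ) := by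
  ext x y
  simp only [kronPi, conjTranspose_apply, of_apply, star_prod]

end kronPi

lemma kronPi_eq_neg_kronPi {V ι R : Type*} [Fintype V] [DecidableEq V] [CommRing R]
    {M N : V → Matrix ι ι R} (i : V) (hi : M i = -N i) (hne : ∀ v ≠ i, M v = N v) :
    kronPi M = -kronPi N := by
  ext x y
  simp only [kronPi, of_apply, ← Finset.mul_prod_erase _ _ (Finset.mem_univ i), hi]
  rw [Finset.prod_congr rfl fun v hv => by rw [hne v (Finset.ne_of_mem_erase hv)]]
  exact neg_mul _ _

lemma pauli_mul_self (a : Fin 4) : pauli a * pauli a = 1 := by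
  fin_cases a <;> ext x y <;> fin_cases x <;> fin_cases y <;>
    simp [pauli, mul_apply, Fin.sum_univ_two, one_apply]

lemma conjTranspose_pauli (a : Fin 4) : (pauli a)ᴴ = pauli a := by
  fin_cases a <;> ext x y <;> fin_cases x <;> fin_cases y <;>
    simp [pauli, conjTranspose_apply, one_apply]

lemma trace_pauli_mul (a b : Fin 4) : (pauli a * pauli b).trace = if a = b then 2 else 0 := by
  fin_cases a <;> fin_cases b <;>
    simp [pauli, trace, Fin.sum_univ_two, one_apply] <;> norm_num

lemma exists_pauli_anticomm {c : Fin 4} (hc : c ≠ 0) :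
    ∃ a ≠ 0, pauli a * pauli c = -(pauli c * pauli a) := by
  fin_cases c
  · exact absurd rfl hc
  · refine ⟨2, by decide, ?_⟩
    ext x y; fin_cases x <;> fin_cases y <;> simp [pauli, mul_apply, Fin.sum_univ_two]
  all_goals
    refine ⟨1, by decide, ?_⟩
    ext x y; fin_cases x <;> fin_cases y <;> simp [pauli, mul_apply, Fin.sum_univ_two]

section pauliString

variable {V : Type*} [Fintype V] [DecidableEq V]

omit [DecidableEq V] in
lemma pauliString_eq_kronPi (s : V → Fin 4) : pauliString s = kronPi (fun v => pauli (s v)) :=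
  rfl

lemma pauliString_mul_self (s : V → Fin 4) : pauliString s * pauliString s = 1 := by
  simp only [pauliString_eq_kronPi, kronPi_mul, pauli_mul_self, kronPi_one]

omit [DecidableEq V] in
lemma conjTranspose_pauliString (s : V → Fin 4) : (pauliString s)ᴴ = pauliString s := by
  simp only [pauliString_eq_kronPi, conjTranspose_kronPi, conjTranspose_pauli]

lemma pauliString_mem_unitary (s : V → Fin 4) :
    pauliString s ∈ unitary (Matrix (V → Fin 2) (V → Fin 2) ℂ) := by
  rw [Unitary.mem_iff, star_eq_conjTranspose, conjTranspose_pauliString, and_self,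
    pauliString_mul_self]

lemma trace_pauliString_mul (s t : V → Fin 4) :
    (pauliString s * pauliString t).trace = if s = t then 2 ^ Fintype.card V else 0 := by
  simp only [pauliString_eq_kronPi, kronPi_mul, trace_kronPi, trace_pauli_mul, funext_iff]
  split_ifs with hst
  · simp [hst]
  · push Not at hst
    obtain ⟨v, hv⟩ := hst
    exact Finset.prod_eq_zero (Finset.mem_univ v) (if_neg hv)

lemma pauliString_single_anticomm (s : V → Fin 4) (i : V) {a : Fin 4}
    (ha : pauli a * pauli (s i) = -(pauli (s i) * pauli a)) :
    pauliString (Function.update (fun _ => (0 : Fin 4)) i a) * pauliString s =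
      -(pauliString s * pauliString (Function.update (fun _ => (0 : Fin 4)) i a)) := by
  simp only [pauliString_eq_kronPi, kronPi_mul]
  refine kronPi_eq_neg_kronPi i (by simpa using ha) fun v hv => ?_
  simp [Function.update_of_ne hv, pauli]

lemma trace_sum_smul_pauliString_mul {Γ : Type*} [Fintype Γ] {P : Γ → V → Fin 4}
    (hP : Function.Injective P) (c : Γ → ℂ) (γ : Γ) :
    ((∑ γ', c γ' • pauliString (P γ')) * pauliString (P γ)).trace =
      c γ * 2 ^ Fintype.card V := by
  classical
  simp only [Finset.sum_mul, smul_mul_assoc, trace_sum, trace_smul, trace_pauliString_mul,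
    smul_eq_mul, mul_ite, mul_zero]
  simp only [hP.eq_iff, Fintype.sum_ite_eq']

lemma norm_trace_mul_star_le_tauNorm (B : Matrix (V → Fin 2) (V → Fin 2) ℂ)
    {Q : Matrix (V → Fin 2) (V → Fin 2) ℂ}
    (hQ : Q ∈ unitary (Matrix (V → Fin 2) (V → Fin 2) ℂ)) :
    ‖(B * star Q).trace‖ ≤ 2 ^ Fintype.card V * tauNorm B := by
  have hpos : (0 : ℝ) < 2 ^ Fintype.card V := by positivity
  calc ‖(B * star Q).trace‖
      ≤ √(B * Bᴴ).trace.re * √(Q * Qᴴ).trace.re := norm_trace_mul_conjTranspose_le B Q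
    _ = √(B * Bᴴ).trace.re * √(2 ^ Fintype.card V) := by
      rw [← star_eq_conjTranspose Q, Unitary.mul_star_self_of_mem hQ, trace_one]
      simp only [Fintype.card_fun, Fintype.card_fin, Nat.cast_pow, Nat.cast_ofNat]
      norm_cast
    _ = 2 ^ Fintype.card V * tauNorm B := by
      rw [tauNorm, Real.sqrt_div' _ hpos.le]
      field_simp
      rw [Real.sq_sqrt hpos.le]

end pauliString

theorem locally_good_coefficients_general
    {V Γ : Type} [Fintype V] [DecidableEq V] [Fintype Γ]
    (P : Γ → V → Fin 4) (hinj : Function.Injective P)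
    (h h' : Γ → ℝ) (i : V) (ε : ℝ)
    (H H' : Matrix (V → Fin 2) (V → Fin 2) ℂ)
    (hH : H = ∑ γ, (h γ : ℂ) • pauliString (P γ))
    (hH' : H' = ∑ γ, (h' γ : ℂ) • pauliString (P γ))
    (hcomm : ∀ a : Fin 4, a ≠ 0 →
      tauNorm (pauliString (Function.update (fun _ => (0 : Fin 4)) i a) * (H - H') -
        (H - H') * pauliString (Function.update (fun _ => (0 : Fin 4)) i a)) ≤ ε) :
    ∀ γ, P γ i ≠ 0 → |h γ - h' γ| ≤ ε := by
  intro γ hγ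
  obtain ⟨a, ha, hanti⟩ := exists_pauli_anticomm hγ
  set A := pauliString (Function.update (fun _ => (0 : Fin 4)) i a)
  have hdiff : H - H' = ∑ γ', ((h γ' - h' γ' : ℝ) : ℂ) • pauliString (P γ') := by
    simp only [hH, hH', ← Finset.sum_sub_distrib, ← sub_smul, Complex.ofReal_sub]
  have htrace : ((A * (H - H') - (H - H') * A) * star (A * pauliString (P γ))).trace =
      2 * (h γ - h' γ : ℝ) * 2 ^ Fintype.card V := by
    rw [star_mul, star_eq_conjTranspose, star_eq_conjTranspose, conjTranspose_pauliString,
      conjTranspose_pauliString, trace_commutator_mul_of_anticomm (pauliString_mul_self _)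
      (pauliString_single_anticomm _ i hanti), hdiff, trace_sum_smul_pauliString_mul hinj,
      mul_assoc]
  have hbound : 2 * |h γ - h' γ| * 2 ^ Fintype.card V ≤ ε * 2 ^ Fintype.card V := calc
    2 * |h γ - h' γ| * 2 ^ Fintype.card V
        = ‖((A * (H - H') - (H - H') * A) * star (A * pauliString (P γ))).trace‖ := by
      rw [htrace, norm_mul, norm_mul, Complex.norm_real, norm_pow, Complex.norm_two,
        Real.norm_eq_abs]
    _ ≤ 2 ^ Fintype.card V * tauNorm (A * (H - H') - (H - H') * A) :=
      norm_trace_mul_star_le_tauNorm _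
        (mul_mem (pauliString_mem_unitary _) (pauliString_mem_unitary _))
    _ ≤ 2 ^ Fintype.card V * ε := by gcongr; exact hcomm a ha
    _ = ε * 2 ^ Fintype.card V := mul_comm _ _
  have := le_of_mul_le_mul_right hbound (by positivity)
  linarith [abs_nonneg (h γ - h' γ)]

/-- **Locally good coefficients:** if `H = Σ_γ h_γ P_γ` and `H' = Σ_γ h'_γ P_γ` for
distinct non-identity Pauli strings `P_γ`, and `‖[A, H−H']‖_τ ≤ ε` for each of the
single-qubit Paulis `A ∈ {X_i, Y_i, Z_i}` on a given qubit `i`, then `|h_γ − h'_γ| ≤ ε`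
for each `γ` whose Pauli string acts (nontrivially) on qubit `i`. -/
theorem locally_good_coefficients
    {V Γ : Type} [Fintype V] [DecidableEq V] [Fintype Γ]
    (P : Γ → V → Fin 4) (hinj : Function.Injective P)
    (hnontriv : ∀ γ, P γ ≠ fun _ => 0)
    (h h' : Γ → ℝ) (i : V) (ε : ℝ)
    (H H' : Matrix (V → Fin 2) (V → Fin 2) ℂ)
    (hH : H = ∑ γ, (h γ : ℂ) • pauliString (P γ))
    (hH' : H' = ∑ γ, (h' γ : ℂ) • pauliString (P γ))
    (hcomm : ∀ a : Fin 4, a ≠ 0 →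
      tauNorm (pauliString (Function.update (fun _ => (0 : Fin 4)) i a) * (H - H') -
        (H - H') * pauliString (Function.update (fun _ => (0 : Fin 4)) i a)) ≤ ε) :
    ∀ γ, P γ i ≠ 0 → |h γ - h' γ| ≤ ε :=
  locally_good_coefficients_general P hinj h h' i ε H H' hH hH' hcomm
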